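/- arXiv:2603.08301 — 3 statements merged into one kernel-verified Lean document; each statement's English description precedes it below -/
import Mathlib

section
/- In a Lie algebra with elements K_l (l ≥ 1, with K_0 := 0) and σ_r (r ≥ 0) satisfying ⟦K_l, K_r⟧ = 0, ⟦K_l, σ_r⟧ = l(K_{l+r} + K_{l+r-1}), and ⟦σ_l, σ_r⟧ = (l-r)(σ_{l+r} + σ_{l+r-1}), the elements τ_{s,r} := s·t·(K_{s+r} + K_{s+r-1}) + σ_r (for a fixed s ≥ 1 and scalar t) satisfy ⟦τ_{s,l}, τ_{s,r}⟧ = (l-r)(τ_{s,l+r} + τ_{s,l+r-1}) and ⟦K_l, τ_{s,r}⟧ = l(K_{l+r} + K_{l+r-1}). -/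
/-- Time-dependent symmetries of the sdBurgers hierarchy (Corollary 4.1):
    τ_{s,r} := s·t·(K_{s+r} + K_{s+r-1}) + σ_r satisfies the same algebra as the σ's. -/
theorem time_dependent_symmetry_algebra
    {L : Type*} [LieRing L] [LieAlgebra ℝ L]
    (K σ : ℕ → L) (s : ℕ) (hs : 1 ≤ s) (t : ℝ)
    (hK0 : K 0 = 0)
    (hKK : ∀ l r : ℕ, ⁅K l, K r⁆ = 0)
    (hKσ : ∀ l r : ℕ, 1 ≤ l → ⁅K l, σ r⁆ = (l : ℝ) • (K (l + r) + K (l + r - 1)))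
    (hσσ : ∀ l r : ℕ, ⁅σ l, σ r⁆ = ((l : ℝ) - (r : ℝ)) • (σ (l + r) + σ (l + r - 1)))
    (τ : ℕ → L)
    (hτ : ∀ r : ℕ, τ r = ((s : ℝ) * t) • (K (s + r) + K (s + r - 1)) + σ r) :
    (∀ l r : ℕ, ⁅τ l, τ r⁆ = ((l : ℝ) - (r : ℝ)) • (τ (l + r) + τ (l + r - 1))) ∧
    (∀ l r : ℕ, 1 ≤ l → ⁅K l, τ r⁆ = (l : ℝ) • (K (l + r) + K (l + r - 1))) := by
  have hKσ' : ∀ m n : ℕ, ⁅K m, σ n⁆ = (m : ℝ) • (K (m + n) + K (m + n - 1)) := by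
    intro m n
    rcases Nat.eq_zero_or_pos m with rfl | hm
    · simp [hK0]
    · exact hKσ m n hm
  have hσK : ∀ l m : ℕ, ⁅σ l, K m⁆ = (-(m : ℝ)) • (K (m + l) + K (m + l - 1)) := by
    intro l m
    rw [← lie_skew, hKσ' m l, neg_smul]
  constructor
  · intro l r
    rcases Nat.eq_zero_or_pos (l + r) with h0 | hpos
    · obtain ⟨rfl, rfl⟩ : l = 0 ∧ r = 0 := by omega
      simp
    · obtain ⟨s', rfl⟩ : ∃ s', s = s' + 1 := ⟨s - 1, by omega⟩
      obtain ⟨m, hm⟩ : ∃ m, l + r = m + 1 := ⟨l + r - 1, by omega⟩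
      rw [hτ, hτ, hτ, hτ]
      simp only [lie_add, add_lie, lie_smul, smul_lie, hKK, hKσ', hσK, hσσ,
        smul_zero, zero_add, add_zero, smul_add]
      have e1 : s' + 1 + l - 1 = s' + l := by omega
      have e2 : s' + 1 + r - 1 = s' + r := by omega
      have e3 : s' + 1 + l + r = s' + 1 + m + 1 := by omega
      have e4 : s' + 1 + l + r - 1 = s' + 1 + m := by omega
      have e5 : s' + l + r = s' + 1 + m := by omega
      have e6 : s' + l + r - 1 = s' + m := by omega
      have e7 : s' + 1 + r + l = s' + 1 + m + 1 := by omega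
      have e8 : s' + 1 + r + l - 1 = s' + 1 + m := by omega
      have e9 : s' + r + l = s' + 1 + m := by omega
      have e10 : s' + r + l - 1 = s' + m := by omega
      have e11 : l + r = m + 1 := hm
      have e12 : l + r - 1 = m := by omega
      have e13 : s' + 1 + (m + 1) = s' + 1 + m + 1 := by omega
      have e14 : s' + 1 + (m + 1) - 1 = s' + 1 + m := by omega
      have e15 : s' + 1 + m - 1 = s' + m := by omega
      have f1 : m + 1 - 1 = m := by omega
      have f2 : s' + 1 + m + 1 - 1 = s' + 1 + m := by omega
      simp only [e1, e2, e3, e4, e5, e6, e7, e8, e9, e10, e11, e12, e13, e14, e15, f1, f2]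
      have cl : (l : ℝ) + (r : ℝ) = (m : ℝ) + 1 := by exact_mod_cast congrArg (Nat.cast : ℕ → ℝ) hm
      match_scalars <;> ring
  · intro l r hl
    rw [hτ r, lie_add, lie_smul, lie_add, hKK, hKK, hKσ l r hl]
    simp
end

section
/- Define on functions z : ℤ → ℝ the flows K̃_1(z)(n) = z(n)(z(n+1) - z(n)) and σ̃_1(z)(n) = n·K̃_1(z)(n) + z(n+1)z(n) - z(n). Then the Lie bracket ⟦K̃_1, σ̃_1⟧(z) := K̃_1'(z)[σ̃_1(z)] - σ̃_1'(z)[K̃_1(z)] equals K̃_2(z) + K̃_1(z), where K̃_2(z)(n) = z(n)(z(n+2)z(n+1) - z(n+1)z(n)) - 2K̃_1(z)(n). -/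
/-- The first combined sdBurgers flow. -/
def sdK1 (z : ℤ → ℝ) : ℤ → ℝ := fun n => z n * (z (n + 1) - z n)

/-- The second combined sdBurgers flow. -/
def sdK2 (z : ℤ → ℝ) : ℤ → ℝ :=
  fun n => z n * (z (n + 2) * z (n + 1) - z (n + 1) * z n) - 2 * sdK1 z n

/-- The master symmetry of the combined sdBurgers hierarchy. -/
def sdSigma1 (z : ℤ → ℝ) : ℤ → ℝ :=
  fun n => (n : ℝ) * sdK1 z n + z (n + 1) * z n - z n

/-!
Both fields are polynomials in `z n` and `z (n + 1)`, so their Gâteaux derivatives follow from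
the product rule. In the bracket the explicit weight `n` of `σ̃_1 = n K̃_1 + …` cancels, except
for the extra unit that the shift `n ↦ n + 1` contributes, and what is left is a polynomial
identity in `z n`, `z (n + 1)`, `z (n + 2)`.
-/

section GateauxDerivative

variable (z g : ℤ → ℝ) (n : ℤ)

lemma hasDerivAt_add_mul_apply (m : ℤ) :
    HasDerivAt (fun ε : ℝ => z m + ε * g m) (g m) 0 := by
  simpa using ((hasDerivAt_id (0 : ℝ)).mul_const (g m)).const_add (z m)

lemma hasDerivAt_sdK1_add_mul :
    HasDerivAt (fun ε : ℝ => sdK1 (fun m => z m + ε * g m) n)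
      (g n * (z (n + 1) - z n) + z n * (g (n + 1) - g n)) 0 := by
  have hn := hasDerivAt_add_mul_apply z g n
  have hsucc := hasDerivAt_add_mul_apply z g (n + 1)
  exact (hn.mul (hsucc.sub hn)).congr_deriv (by simp)

lemma hasDerivAt_sdSigma1_add_mul :
    HasDerivAt (fun ε : ℝ => sdSigma1 (fun m => z m + ε * g m) n)
      ((n : ℝ) * (g n * (z (n + 1) - z n) + z n * (g (n + 1) - g n))
        + (g (n + 1) * z n + z (n + 1) * g n) - g n) 0 := by
  have hn := hasDerivAt_add_mul_apply z g n
  have hsucc := hasDerivAt_add_mul_apply z g (n + 1)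
  have hK1 := hasDerivAt_sdK1_add_mul z g n
  exact (((hK1.const_mul (n : ℝ)).add (hsucc.mul hn)).sub hn).congr_deriv (by simp)

end GateauxDerivative

/-- Base case of the master-symmetry recursion: ⟦K̃_1, σ̃_1⟧ = K̃_2 + K̃_1,
    with the Lie bracket of lattice vector fields computed via pointwise
    Gâteaux derivatives. -/
theorem sdBurgers_K1_sigma1_bracket (z : ℤ → ℝ) (n : ℤ) :
    deriv (fun ε : ℝ => sdK1 (fun m => z m + ε * sdSigma1 z m) n) 0
      - deriv (fun ε : ℝ => sdSigma1 (fun m => z m + ε * sdK1 z m) n) 0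
      = sdK2 z n + sdK1 z n := by
  rw [(hasDerivAt_sdK1_add_mul z (sdSigma1 z) n).deriv,
    (hasDerivAt_sdSigma1_add_mul z (sdK1 z) n).deriv]
  simp only [sdK1, sdK2, sdSigma1, show n + 1 + 1 = n + 2 by ring]
  push_cast
  ring
end

section
/- Let L̃ be a hereditary operator (L̃'[L̃f]g - L̃'[L̃g]f = L̃(L̃'[f]g - L̃'[g]f) for all f,g) depending on z, and let σ̃_0 be a vector field with L̃'[σ̃_0] = [σ̃_0', L̃] + L̃ + I. Define σ̃_m = L̃^m σ̃_0. Then for every m ≥ 0 one has L̃'[σ̃_m] = [σ̃_m', L̃] + L̃^{m+1} + L̃^m. -/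
/-- Lemma 4.1: if L̃ is hereditary and L̃'[σ̃_0] = [σ̃_0', L̃] + L̃ + I, then for
    σ̃_m = L̃^m σ̃_0 one has L̃'[σ̃_m] = [σ̃_m', L̃] + L̃^{m+1} + L̃^m for all m ≥ 0. -/
theorem hereditary_nonisospectral_recursion
    {V : Type*} [NormedAddCommGroup V] [NormedSpace ℝ V]
    (L : V → (V →L[ℝ] V)) (σ0 : V → V)
    (hLsmooth : ContDiff ℝ (⊤ : ℕ∞) L) (hσ0smooth : ContDiff ℝ (⊤ : ℕ∞) σ0)
    (hereditary : ∀ z : V, ∀ f g : V,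
      (fderiv ℝ L z (L z f)) g - (fderiv ℝ L z (L z g)) f
        = L z ((fderiv ℝ L z f) g - (fderiv ℝ L z g) f))
    (hbase : ∀ z : V,
      fderiv ℝ L z (σ0 z)
        = (fderiv ℝ σ0 z).comp (L z) - (L z).comp (fderiv ℝ σ0 z)
          + L z + ContinuousLinearMap.id ℝ V)
    (σ : ℕ → V → V)
    (hσ : ∀ m : ℕ, ∀ z : V, σ m z = ((L z) ^ m) (σ0 z)) :
    ∀ m : ℕ, ∀ z : V,
      fderiv ℝ L z (σ m z)
        = (fderiv ℝ (σ m) z).comp (L z) - (L z).comp (fderiv ℝ (σ m) z)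
          + (L z) ^ (m + 1) + (L z) ^ m := by
  have hσsmooth : ∀ m : ℕ, ContDiff ℝ (⊤ : ℕ∞) (σ m) := by
    intro m
    have : σ m = fun z => ((L z) ^ m) (σ0 z) := funext (hσ m)
    rw [this]
    exact (hLsmooth.pow m).clm_apply hσ0smooth
  have hLd : ∀ z : V, DifferentiableAt ℝ L z := fun z =>
    (hLsmooth.differentiable (by simp)).differentiableAt
  have hσd : ∀ k : ℕ, ∀ z : V, DifferentiableAt ℝ (σ k) z := fun k z =>
    ((hσsmooth k).differentiable (by simp)).differentiableAt
  intro m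
  induction m with
  | zero =>
    intro z
    have h0 : σ 0 = σ0 := by
      funext y; rw [hσ 0 y]; simp
    rw [h0]
    simpa [ContinuousLinearMap.one_def] using hbase z
  | succ m ih =>
    intro z
    have hrec : σ (m + 1) = fun y => L y (σ m y) := by
      funext y
      rw [hσ (m + 1) y, hσ m y, pow_succ']
      rfl
    have hD : fderiv ℝ (σ (m + 1)) z
        = (L z).comp (fderiv ℝ (σ m) z) + (fderiv ℝ L z).flip (σ m z) := by
      rw [hrec]
      exact fderiv_clm_apply (hLd z) (hσd m z)
    have hval : σ (m + 1) z = L z (σ m z) := by rw [hrec]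
    ext g
    rw [hval, hD]
    have hih : ∀ v : V, fderiv ℝ L z (σ m z) v
        = fderiv ℝ (σ m) z (L z v) - L z (fderiv ℝ (σ m) z v)
          + ((L z) ^ (m + 1)) v + ((L z) ^ m) v := by
      intro v
      rw [ih z]
      simp [ContinuousLinearMap.comp_apply]
    have hher' : fderiv ℝ L z (L z (σ m z)) g
        = fderiv ℝ L z (L z g) (σ m z)
          + L z (fderiv ℝ L z (σ m z) g) - L z (fderiv ℝ L z g (σ m z)) := by
      have h := hereditary z (σ m z) g
      have : fderiv ℝ L z (L z (σ m z)) g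
          = fderiv ℝ L z (L z g) (σ m z)
            + L z (fderiv ℝ L z (σ m z) g - fderiv ℝ L z g (σ m z)) := by
        rw [← h]; abel
      rw [this, map_sub]; abel
    simp only [ContinuousLinearMap.add_apply, ContinuousLinearMap.sub_apply,
      ContinuousLinearMap.comp_apply, ContinuousLinearMap.flip_apply]
    rw [hher', hih g]
    simp only [map_add, map_sub, pow_succ', ContinuousLinearMap.mul_apply]
    abel
end
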